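/- Fix k ≥ 1. Let (δ, λ, s0) and (δ', λ', s0) be Mealy machines over input set I, state set S, output set O. Suppose: (base case) for every input sequence x1,...,xk, running both machines from s0 yields identical outputs and identical states at every step 1,...,k; and (inductive case) for every state y ∈ S and every input sequence x1,...,x_{k+1}, if the two machines started at y agree on outputs and next-states for the first k steps when driven by δ's trajectory (i.e., λ' and δ' agree with λ and δ at each of the first k states of δ's run from y), then they also agree at step k+1. Then the machines are sequentially equivalent. -/

import Mathlib

/-- State after feeding a list of inputs. -/
def nextState {I S : Type} (δ : I → S → S) (s : S) (xs : List I) : S :=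
  xs.foldl (fun s x => δ x s) s

/-- Output sequence of a Mealy machine on a list of inputs. -/
def outputs {I S O : Type} (δ : I → S → S) (lam : I → S → O) : S → List I → List O
  | _, [] => []
  | s, x :: xs => lam x s :: outputs δ lam (δ x s) xs

/-- A state is reachable from `s0` if some finite input sequence drives the machine to it. -/
def Reachable {I S : Type} (δ : I → S → S) (s0 s : S) : Prop :=
  ∃ xs : List I, nextState δ s0 xs = s

/-- Trajectory (run) of the transition function from `y` under the input stream `x`. -/
def traj {I S : Type} (δ : I → S → S) (x : ℕ → I) (y : S) : ℕ → S
  | 0 => y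
  | i + 1 => δ (x i) (traj δ x y i)

/-!
If `δ'`, `lam'` agree with `δ`, `lam` at every state reachable under `δ`, the two runs from `s0`
coincide, so the machines are sequentially equivalent. Agreement along every run of `δ` from `s0`
follows by `k`-step induction: the base case gives the first `k` steps, and the inductive
hypothesis, applied to the state reached after `m` steps and the shifted input stream, turns
agreement at steps `m, …, m + k - 1` into agreement at step `m + k`.
-/

theorem Nat.rec_window {P : ℕ → Prop} {k : ℕ} (base : ∀ n < k, P n)
    (step : ∀ m, (∀ i < k, P (m + i)) → P (m + k)) (n : ℕ) : P n := by
  induction n using Nat.strong_induction_on with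
  | _ n ih =>
    rcases lt_or_ge n k with hn | hn
    · exact base n hn
    · obtain ⟨m, rfl⟩ : ∃ m, n = m + k := ⟨n - k, by omega⟩
      exact step m fun i hi => ih (m + i) (by omega)

section Mealy

variable {I S O : Type} (δ δ' : I → S → S) (lam lam' : I → S → O)

theorem traj_add (x : ℕ → I) (y : S) (m : ℕ) :
    ∀ i, traj δ (fun j => x (m + j)) (traj δ x y m) i = traj δ x y (m + i)
  | 0 => rfl
  | i + 1 => congrArg (δ (x (m + i))) (traj_add x y m i)

theorem nextState_eq_traj (s : S) (ys : List I) (x : ℕ → I)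
    (hx : ∀ i (h : i < ys.length), x i = ys[i]) :
    nextState δ s ys = traj δ x s ys.length := by
  induction ys using List.reverseRecOn with
  | nil => rfl
  | append_singleton ys b ih =>
    have hb : x ys.length = b := by simpa using hx ys.length (by simp)
    have hys : ∀ i (h : i < ys.length), x i = ys[i] := fun i h => by
      rw [hx i (by simp; omega), List.getElem_append_left h]
    simp only [nextState, List.foldl_append, List.foldl_cons, List.foldl_nil,
      List.length_append, List.length_singleton] at ih ⊢
    rw [ih hys, ← hb]
    rfl

theorem Reachable.of_step {s0 s : S} {a : I} (h : Reachable δ (δ a s0) s) :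
    Reachable δ s0 s :=
  let ⟨ys, hys⟩ := h
  ⟨a :: ys, hys⟩

def Agree (a : I) (s : S) : Prop :=
  δ' a s = δ a s ∧ lam' a s = lam a s

theorem outputs_eq_of_agree_reachable (s0 : S)
    (h : ∀ s, Reachable δ s0 s → ∀ a, Agree δ δ' lam lam' a s) (xs : List I) :
    outputs δ lam s0 xs = outputs δ' lam' s0 xs := by
  induction xs generalizing s0 with
  | nil => rfl
  | cons a as ih =>
    obtain ⟨hδ, hlam⟩ := h s0 ⟨[], rfl⟩ a
    simp only [outputs, hδ, hlam]
    exact congrArg _ (ih (δ a s0) fun s hs => h s (hs.of_step δ))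

theorem agree_traj_of_traj_eq (x : ℕ → I) (s0 : S) (n : ℕ)
    (hs : traj δ x s0 n = traj δ' x s0 n) (hs' : traj δ x s0 (n + 1) = traj δ' x s0 (n + 1))
    (hout : lam (x n) (traj δ x s0 n) = lam' (x n) (traj δ' x s0 n)) :
    Agree δ δ' lam lam' (x n) (traj δ x s0 n) := by
  refine ⟨?_, by rw [hout, hs]⟩
  calc δ' (x n) (traj δ x s0 n) = traj δ' x s0 (n + 1) := by rw [hs]; rfl
    _ = δ (x n) (traj δ x s0 n) := hs'.symm

theorem agree_reachable_of_agree_traj (s0 : S)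
    (h : ∀ (x : ℕ → I) n, Agree δ δ' lam lam' (x n) (traj δ x s0 n))
    (s : S) (hs : Reachable δ s0 s) (a : I) : Agree δ δ' lam lam' a s := by
  obtain ⟨ys, rfl⟩ := hs
  let x : ℕ → I := fun i => if hi : i < ys.length then ys[i] else a
  have hxa : x ys.length = a := dif_neg (lt_irrefl _)
  rw [nextState_eq_traj δ s0 ys x fun i hi => dif_pos hi, ← hxa]
  exact h x ys.length

end Mealy

theorem stmt_3_general {I S O : Type} (k : ℕ)
    (δ δ' : I → S → S) (lam lam' : I → S → O) (s0 : S)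
    (hbase : ∀ x : ℕ → I,
      (∀ i ≤ k, traj δ x s0 i = traj δ' x s0 i) ∧
      (∀ i < k, lam (x i) (traj δ x s0 i) = lam' (x i) (traj δ' x s0 i)))
    (hind : ∀ (y : S) (x : ℕ → I),
      (∀ i < k, δ' (x i) (traj δ x y i) = δ (x i) (traj δ x y i) ∧
        lam' (x i) (traj δ x y i) = lam (x i) (traj δ x y i)) →
      (δ' (x k) (traj δ x y k) = δ (x k) (traj δ x y k) ∧
        lam' (x k) (traj δ x y k) = lam (x k) (traj δ x y k))) :
    ∀ xs : List I, outputs δ lam s0 xs = outputs δ' lam' s0 xs := by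
  have hrun : ∀ (x : ℕ → I) n, Agree δ δ' lam lam' (x n) (traj δ x s0 n) := by
    intro x
    obtain ⟨hstate, hout⟩ := hbase x
    refine Nat.rec_window (k := k) (fun n hn => ?_) (fun m hwindow => ?_)
    · exact agree_traj_of_traj_eq δ δ' lam lam' x s0 n (hstate n hn.le) (hstate (n + 1) hn)
        (hout n hn)
    · have := hind (traj δ x s0 m) (fun j => x (m + j))
        (fun i hi => by rw [traj_add δ x s0 m i]; exact hwindow i hi)
      rwa [traj_add δ x s0 m k] at this
  exact outputs_eq_of_agree_reachable δ δ' lam lam' s0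
    (agree_reachable_of_agree_traj δ δ' lam lam' s0 hrun)

theorem stmt_3 {I S O : Type} (k : ℕ) (hk : 1 ≤ k)
    (δ δ' : I → S → S) (lam lam' : I → S → O) (s0 : S)
    (hbase : ∀ x : ℕ → I,
      (∀ i ≤ k, traj δ x s0 i = traj δ' x s0 i) ∧
      (∀ i < k, lam (x i) (traj δ x s0 i) = lam' (x i) (traj δ' x s0 i)))
    (hind : ∀ (y : S) (x : ℕ → I),
      (∀ i < k, δ' (x i) (traj δ x y i) = δ (x i) (traj δ x y i) ∧
        lam' (x i) (traj δ x y i) = lam (x i) (traj δ x y i)) →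
      (δ' (x k) (traj δ x y k) = δ (x k) (traj δ x y k) ∧
        lam' (x k) (traj δ x y k) = lam (x k) (traj δ x y k))) :
    ∀ xs : List I, outputs δ lam s0 xs = outputs δ' lam' s0 xs :=
  stmt_3_general k δ δ' lam lam' s0 hbase hind
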